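/- arXiv:2102.10148 — 4 statements merged into one kernel-verified Lean document; each statement's English description precedes it below -/
import Mathlib

section
/- Let x be i.i.d. Rademacher random variables, u a unit vector in ℝ^n, and X = ⟨u,x⟩. Then E[exp((3/8) X²)] ≤ 2; consequently the sub-gaussian norm ‖X‖_{ψ₂} = inf{t > 0 : E exp(X²/t²) ≤ 2} is at most √(8/3). -/
/-!
Gaussian linearization (the Hubbard–Stratonovich trick): for `a² = 2λ`,
`exp (λ x²) = (2π)^(-1/2) ∫ exp (a x g - g² / 2) dg`. Taking expectations and swapping the
integrals turns a bound `E exp (t X) ≤ exp (c t² / 2)` on the moment generating function into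
`E exp (λ X²) ≤ (2π)^(-1/2) ∫ exp (-(1 - 2cλ) g² / 2) dg = (1 - 2cλ)^(-1/2)`.
By Hoeffding's lemma a Rademacher variable satisfies the mgf bound with `c = 1`, hence
`⟨u, x⟩` satisfies it with `c = ‖u‖² = 1`, and `λ = 3/8` gives `(1/4)^(-1/2) = 2`.
-/

open MeasureTheory ProbabilityTheory Real
open scoped NNReal ENNReal

section Rademacher

variable {Ω : Type*} [MeasurableSpace Ω] {μ : Measure Ω} [IsProbabilityMeasure μ]
  {Y : Ω → ℝ}

lemma ae_eq_one_or_eq_neg_one (hY : Measurable Y) (h1 : μ {ω | Y ω = 1} = 1 / 2)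
    (hm1 : μ {ω | Y ω = -1} = 1 / 2) : ∀ᵐ ω ∂μ, Y ω = 1 ∨ Y ω = -1 := by
  have hdisj : Disjoint {ω | Y ω = 1} {ω | Y ω = -1} :=
    Set.disjoint_left.2 fun ω (h : Y ω = 1) (h' : Y ω = -1) => by norm_num [h] at h'
  have hB : MeasurableSet {ω | Y ω = -1} := hY (measurableSet_singleton (-1))
  rw [ae_iff_measure_eq (by rw [Set.ofPred_or]; exact
      ((hY (measurableSet_singleton 1)).union hB).nullMeasurableSet), Set.ofPred_or,
    measure_union hdisj hB, h1, hm1, ENNReal.add_halves, measure_univ]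

lemma integral_eq_zero_of_rademacher (hY : Measurable Y) (h1 : μ {ω | Y ω = 1} = 1 / 2)
    (hm1 : μ {ω | Y ω = -1} = 1 / 2) : μ[Y] = 0 := by
  have hA : MeasurableSet {ω | Y ω = 1} := hY (measurableSet_singleton 1)
  have hY_eq : Y =ᵐ[μ] fun ω => 2 * {ω | Y ω = 1}.indicator 1 ω - 1 := by
    filter_upwards [ae_eq_one_or_eq_neg_one hY h1 hm1] with ω hω
    rcases hω with h | h <;> norm_num [Set.indicator_apply, h]
  rw [integral_congr_ae hY_eq, integral_sub ((integrable_indicator_iff hA).2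
      (integrable_const _).integrableOn |>.const_mul 2) (integrable_const _),
    integral_const_mul, integral_indicator_one hA, measureReal_def, h1]
  simp

lemma hasSubgaussianMGF_of_rademacher (hY : Measurable Y) (h1 : μ {ω | Y ω = 1} = 1 / 2)
    (hm1 : μ {ω | Y ω = -1} = 1 / 2) : HasSubgaussianMGF Y 1 μ := by
  have hIcc : ∀ᵐ ω ∂μ, Y ω ∈ Set.Icc (-1) 1 := by
    filter_upwards [ae_eq_one_or_eq_neg_one hY h1 hm1] with ω hω
    rcases hω with h | h <;> norm_num [h]
  convert hasSubgaussianMGF_of_mem_Icc_of_integral_eq_zero hY.aemeasurable hIcc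
    (integral_eq_zero_of_rademacher hY h1 hm1)
  ext; norm_num

end Rademacher

lemma exp_mul_sub_sq_half_eq (s g : ℝ) :
    exp (s * g - g ^ 2 / 2) = exp (-(1 / 2) * (g - s) ^ 2) * exp (s ^ 2 / 2) := by
  rw [← exp_add]; ring_nf

lemma integrable_exp_mul_sub_sq_half (s : ℝ) :
    Integrable fun g : ℝ => exp (s * g - g ^ 2 / 2) := by
  simp_rw [exp_mul_sub_sq_half_eq]
  exact ((integrable_exp_neg_mul_sq (by norm_num)).comp_sub_right s).mul_const _

lemma integral_exp_mul_sub_sq_half (s : ℝ) :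
    ∫ g : ℝ, exp (s * g - g ^ 2 / 2) = √(2 * π) * exp (s ^ 2 / 2) := by
  simp_rw [exp_mul_sub_sq_half_eq]
  rw [integral_mul_const, integral_sub_right_eq_self (fun g => exp (-(1 / 2) * g ^ 2)) s,
    integral_gaussian]
  norm_num [mul_comm]

namespace ProbabilityTheory.HasSubgaussianMGF

variable {Ω : Type*} [MeasurableSpace Ω] {μ : Measure Ω} {X : Ω → ℝ} {c : ℝ≥0}

lemma lintegral_exp_mul_sub_sq_half_le (h : HasSubgaussianMGF X c μ) (a g : ℝ) :
    ∫⁻ ω, ENNReal.ofReal (exp (a * X ω * g - g ^ 2 / 2)) ∂μ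
      ≤ ENNReal.ofReal (exp (-((1 - c * a ^ 2) / 2) * g ^ 2)) := by
  have hsplit : ∀ ω, exp (a * X ω * g - g ^ 2 / 2) = exp (a * g * X ω) * exp (-(g ^ 2 / 2)) :=
    fun ω => by rw [← exp_add]; ring_nf
  calc _ = ENNReal.ofReal (mgf X μ (a * g) * exp (-(g ^ 2 / 2))) := by
        simp_rw [hsplit]
        rw [← ofReal_integral_eq_lintegral_ofReal ((h.integrable_exp_mul _).mul_const _)
          (ae_of_all _ fun _ => by positivity), integral_mul_const, mgf]
    _ ≤ ENNReal.ofReal (exp (c * (a * g) ^ 2 / 2) * exp (-(g ^ 2 / 2))) :=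
        ENNReal.ofReal_le_ofReal (mul_le_mul_of_nonneg_right (h.mgf_le _) (exp_nonneg _))
    _ = _ := by rw [← exp_add]; ring_nf

theorem integral_exp_mul_sq_le (h : HasSubgaussianMGF X c μ) {l : ℝ} (hl : 0 ≤ l)
    (hlc : 2 * c * l < 1) : ∫ ω, exp (l * X ω ^ 2) ∂μ ≤ 1 / √(1 - 2 * c * l) := by
  have : IsFiniteMeasure μ :=
    (integrable_const_iff_isFiniteMeasure one_ne_zero).1 (by simpa using h.integrable_exp_mul 0)
  set a := √(2 * l)
  have ha : a ^ 2 = 2 * l := sq_sqrt (by positivity)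
  have hb : 0 < (1 - c * a ^ 2) / 2 := by rw [ha]; linarith
  have hC : (0 : ℝ) ≤ (√(2 * π))⁻¹ := by positivity
  have hlin : ∀ ω, ENNReal.ofReal (exp (l * X ω ^ 2)) = ENNReal.ofReal (√(2 * π))⁻¹
      * ∫⁻ g, ENNReal.ofReal (exp (a * X ω * g - g ^ 2 / 2)) := fun ω => by
    rw [← ofReal_integral_eq_lintegral_ofReal (integrable_exp_mul_sub_sq_half _)
      (ae_of_all _ fun _ => by positivity), ← ENNReal.ofReal_mul hC,
      integral_exp_mul_sub_sq_half, inv_mul_cancel_left₀ (by positivity), mul_pow, ha]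
    ring_nf
  have hmeas : AEMeasurable (Function.uncurry fun ω (g : ℝ) =>
      ENNReal.ofReal (exp (a * X ω * g - g ^ 2 / 2))) (μ.prod volume) := by
    have hX : AEMeasurable (fun p : Ω × ℝ => X p.1) (μ.prod volume) :=
      h.aemeasurable.comp_fst
    exact (((hX.const_mul a).mul measurable_snd.aemeasurable).sub
      (measurable_snd.pow_const 2 |>.div_const 2).aemeasurable).exp.ennreal_ofReal
  have hL : ∫⁻ ω, ENNReal.ofReal (exp (l * X ω ^ 2)) ∂μ
      ≤ ENNReal.ofReal (1 / √(1 - 2 * c * l)) :=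
    calc ∫⁻ ω, ENNReal.ofReal (exp (l * X ω ^ 2)) ∂μ
        = ENNReal.ofReal (√(2 * π))⁻¹
            * ∫⁻ g, ∫⁻ ω, ENNReal.ofReal (exp (a * X ω * g - g ^ 2 / 2)) ∂μ := by
          simp_rw [hlin]
          rw [lintegral_const_mul' _ _ ENNReal.ofReal_ne_top, lintegral_lintegral_swap hmeas]
      _ ≤ ENNReal.ofReal (√(2 * π))⁻¹
            * ∫⁻ g, ENNReal.ofReal (exp (-((1 - c * a ^ 2) / 2) * g ^ 2)) := by
          gcongr with g
          exact h.lintegral_exp_mul_sub_sq_half_le a g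
      _ = ENNReal.ofReal ((√(2 * π))⁻¹ * √(π / ((1 - c * a ^ 2) / 2))) := by
          rw [← ofReal_integral_eq_lintegral_ofReal (integrable_exp_neg_mul_sq hb)
            (ae_of_all _ fun _ => by positivity), integral_gaussian, ← ENNReal.ofReal_mul hC]
      _ = ENNReal.ofReal (1 / √(1 - 2 * c * l)) := by
          congr 1
          rw [ha, div_div_eq_mul_div, sqrt_div' _ (by linarith), mul_comm π, ← mul_div_assoc,
            inv_mul_cancel₀ (by positivity)]
          ring_nf
  rw [integral_eq_lintegral_of_nonneg_ae (ae_of_all _ fun _ => by positivity)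
    (by have := h.aemeasurable; fun_prop)]
  exact ENNReal.toReal_le_of_le_ofReal (by positivity) hL

end ProbabilityTheory.HasSubgaussianMGF

lemma hasSubgaussianMGF_sum_mul_rademacher {Ω ι : Type*} [MeasurableSpace Ω] [Fintype ι]
    {μ : Measure Ω} [IsProbabilityMeasure μ] {X : ι → Ω → ℝ}
    (hX : ∀ i, Measurable (X i)) (hindep : iIndepFun X μ)
    (h1 : ∀ i, μ {ω | X i ω = 1} = 1 / 2) (hm1 : ∀ i, μ {ω | X i ω = -1} = 1 / 2)
    (u : ι → ℝ) :
    HasSubgaussianMGF (fun ω => ∑ i, u i * X i ω) (∑ i, ‖u i‖₊ ^ 2) μ := by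
  convert HasSubgaussianMGF.sum_of_iIndepFun
    (hindep.comp (fun i x => u i * x) fun i => measurable_const_mul _) (s := Finset.univ)
    fun i _ => (hasSubgaussianMGF_of_rademacher (hX i) (h1 i) (hm1 i)).const_mul (u i) using 2
  · rfl
  · exact NNReal.eq
      ((by simp : ((‖u _‖₊ ^ 2 : ℝ≥0) : ℝ) = u _ ^ 2).trans (mul_one _).symm)

/-- Let `x` be i.i.d. Rademacher, `u` a unit vector, `X = ⟨u,x⟩`. Then
`E[exp ((3/8) X²)] ≤ 2`, and consequently the sub-gaussian norm
`‖X‖_{ψ₂} = inf {t > 0 : E exp (X²/t²) ≤ 2}` is at most `√(8/3)`. -/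
theorem rademacher_subgaussian_norm {Ω : Type*} [MeasurableSpace Ω] (μ : Measure Ω)
    [IsProbabilityMeasure μ] {n : ℕ} (X : Fin n → Ω → ℝ)
    (hmeas : ∀ i, Measurable (X i))
    (hindep : iIndepFun X μ)
    (hlaw1 : ∀ i, μ {ω | X i ω = 1} = 1 / 2)
    (hlawm1 : ∀ i, μ {ω | X i ω = -1} = 1 / 2)
    (u : Fin n → ℝ) (hu : ∑ i, u i ^ 2 = 1) :
    (∫ ω, Real.exp ((3 / 8) * (∑ i, u i * X i ω) ^ 2) ∂μ ≤ 2) ∧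
      sInf {t : ℝ | 0 < t ∧
          ∫ ω, Real.exp ((∑ i, u i * X i ω) ^ 2 / t ^ 2) ∂μ ≤ 2} ≤
        Real.sqrt (8 / 3) := by
  have hS := hasSubgaussianMGF_sum_mul_rademacher hmeas hindep hlaw1 hlawm1 u
  have hc : ((∑ i, ‖u i‖₊ ^ 2 : ℝ≥0) : ℝ) = 1 := by push_cast; simpa using hu
  have hbound : ∫ ω, exp (3 / 8 * (∑ i, u i * X i ω) ^ 2) ∂μ ≤ 2 := by
    have h := hS.integral_exp_mul_sq_le (l := 3 / 8) (by norm_num) (by rw [hc]; norm_num)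
    rwa [hc, show (1 : ℝ) - 2 * 1 * (3 / 8) = (1 / 2) ^ 2 by norm_num,
      sqrt_sq (by norm_num), one_div_one_div] at h
  refine ⟨hbound, csInf_le ⟨0, fun t ht => ht.1.le⟩ ⟨by positivity, ?_⟩⟩
  convert hbound using 5
  rw [sq_sqrt (by norm_num)]
  ring
end

section
/- Let X be a real-valued random variable with ‖X‖_{ψ₂} ≤ 1 (i.e., P(|X| ≥ t) ≤ 2 exp(-c t²) for all t ≥ 0, for an absolute constant c > 0). Then for any event E with P(E) = q > 0, there is an absolute constant C such that the conditional distribution of X given E satisfies P(|X| > t | E) ≤ 2 exp(-t²/(C log(2/q))) for all t ≥ 0. -/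
open MeasureTheory ProbabilityTheory

/-- If `X` is sub-gaussian with tail `P(|X| ≥ t) ≤ 2 exp (-c t²)` (c > 0 an absolute
constant), then for any event `E` with `P(E) = q > 0` there is an absolute constant
`C > 0` (depending only on `c`) such that
`P(|X| > t | E) ≤ 2 exp (-t²/(C log (2/q)))` for all `t ≥ 0`. -/
theorem subgaussian_conditioning (c : ℝ) (hc : 0 < c) :
    ∃ C : ℝ, 0 < C ∧
      ∀ (Ω : Type) (_ : MeasurableSpace Ω) (μ : Measure Ω),
        IsProbabilityMeasure μ →
        ∀ (X : Ω → ℝ), Measurable X →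
        ∀ (E : Set Ω), MeasurableSet E →
        ∀ q : ℝ, 0 < q → μ E = ENNReal.ofReal q →
        (∀ t : ℝ, 0 ≤ t → μ {ω | t ≤ |X ω|} ≤ ENNReal.ofReal (2 * Real.exp (-c * t ^ 2))) →
        ∀ t : ℝ, 0 ≤ t →
          μ[|E] {ω | t < |X ω|} ≤
            ENNReal.ofReal (2 * Real.exp (-t ^ 2 / (C * Real.log (2 / q)))) := by
  have hlog2 : (0:ℝ) < Real.log 2 := Real.log_pos (by norm_num)
  refine ⟨2 / (c * Real.log 2), by positivity, ?_⟩
  intro Ω m μ hμ X hX E hE q hq hqE htail t ht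
  set C : ℝ := 2 / (c * Real.log 2) with hCdef
  have hq1 : q ≤ 1 := by
    have h1 : μ E ≤ 1 := prob_le_one
    rw [hqE] at h1
    exact_mod_cast (ENNReal.ofReal_le_one).mp h1
  set L : ℝ := Real.log (2 / q) with hLdef
  have hLeq : L = Real.log 2 - Real.log q := Real.log_div (by norm_num) (ne_of_gt hq)
  have hlogq : Real.log q ≤ 0 := Real.log_nonpos (le_of_lt hq) hq1
  have hL2 : Real.log 2 ≤ L := by rw [hLeq]; linarith
  have hLpos : 0 < L := lt_of_lt_of_le hlog2 hL2
  have hCL : 0 < C * L := by positivity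
  have hD : (0:ℝ) < c * Real.log 2 := by positivity
  have hCLv : C * L = 2 * L / (c * Real.log 2) := by rw [hCdef]; ring
  have hE0 : μ E ≠ 0 := by rw [hqE]; simp [hq, ENNReal.ofReal_eq_zero, not_le]
  have hcond := cond_apply (μ := μ) hE {ω | t < |X ω|}
  by_cases hcase : t ^ 2 ≤ L / c
  · -- small t: bound by 1
    have hprob : IsProbabilityMeasure μ[|E] := cond_isProbabilityMeasure hE0
    have h1 : μ[|E] {ω | t < |X ω|} ≤ 1 := prob_le_one
    refine h1.trans ?_
    rw [show (1 : ENNReal) = ENNReal.ofReal 1 from by simp]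
    apply ENNReal.ofReal_le_ofReal
    have ht2 : t ^ 2 ≤ Real.log 2 * (C * L) := by
      rw [le_div_iff₀ hc] at hcase
      rw [hCLv, ← mul_div_assoc, le_div_iff₀ hD]
      nlinarith
    have h2 : t ^ 2 / (C * L) ≤ Real.log 2 := (div_le_iff₀ hCL).mpr ht2
    have hexp : Real.exp (-Real.log 2) ≤ Real.exp (-t ^ 2 / (C * L)) := by
      apply Real.exp_le_exp.mpr; rw [neg_div]; linarith
    have hhalf : Real.exp (-Real.log 2) = 1 / 2 := by
      rw [Real.exp_neg, Real.exp_log (by norm_num)]; norm_num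
    rw [hhalf] at hexp
    linarith
  · push_neg at hcase
    have hsub : E ∩ {ω | t < |X ω|} ⊆ {ω | t ≤ |X ω|} := by
      intro ω hω
      simp only [Set.mem_inter_iff, Set.mem_setOf_eq] at hω ⊢
      exact hω.2.le
    have hb : μ (E ∩ {ω | t < |X ω|}) ≤ ENNReal.ofReal (2 * Real.exp (-c * t ^ 2)) :=
      le_trans (measure_mono hsub) (htail t ht)
    rw [hcond, hqE]
    calc (ENNReal.ofReal q)⁻¹ * μ (E ∩ {ω | t < |X ω|})
        ≤ (ENNReal.ofReal q)⁻¹ * ENNReal.ofReal (2 * Real.exp (-c * t ^ 2)) :=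
          mul_le_mul_right hb _
      _ = ENNReal.ofReal (q⁻¹ * (2 * Real.exp (-c * t ^ 2))) := by
          rw [← ENNReal.ofReal_inv_of_pos hq, ← ENNReal.ofReal_mul (by positivity)]
      _ ≤ ENNReal.ofReal (2 * Real.exp (-t ^ 2 / (C * L))) := by
          apply ENNReal.ofReal_le_ofReal
          have hqinv : q⁻¹ = Real.exp (-Real.log q) := by
            rw [Real.exp_neg, Real.exp_log hq]
          rw [hqinv, mul_comm, mul_assoc, ← Real.exp_add]
          apply mul_le_mul_of_nonneg_left _ (by norm_num)
          apply Real.exp_le_exp.mpr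
          have ht2 : L ≤ c * t ^ 2 := by
            rw [div_lt_iff₀ hc] at hcase; linarith
          have h2 : t ^ 2 ≤ (c * t ^ 2 + Real.log q) * (C * L) := by
            rw [hCLv, ← mul_div_assoc, le_div_iff₀ hD]
            have hlq : Real.log q = Real.log 2 - L := by linarith
            rw [hlq]
            nlinarith [mul_nonneg (by linarith : (0:ℝ) ≤ 2 * L - Real.log 2)
              (by linarith : (0:ℝ) ≤ c * t ^ 2 - L),
              mul_nonneg hLpos.le (by linarith : (0:ℝ) ≤ Real.log 2)]
          have hkey : t ^ 2 / (C * L) ≤ c * t ^ 2 + Real.log q := (div_le_iff₀ hCL).mpr h2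
          rw [neg_div]
          linarith
end

section
/- Two distinct vertices u, v of the Boolean hypercube {0,1}^n can be strictly linearly separated from all other vertices (i.e., there exist w, b with ⟨w,x⟩ > b for x ∈ {u,v} and ⟨w,x⟩ < b for all other vertices x) if and only if u and v are adjacent, i.e., their Hamming distance is 1. -/
open Finset

/-- The real coordinates of a vertex of the Boolean hypercube `{0,1}^n`. -/
def vertexCoords {n : ℕ} (v : Fin n → Bool) : Fin n → ℝ := fun i => if v i then 1 else 0

/-- Two distinct vertices `u, v` of the hypercube `{0,1}^n` can be strictly linearly
separated from all other vertices if and only if their Hamming distance is `1`. -/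
theorem pair_separation_iff_adjacent (n : ℕ) (u v : Fin n → Bool) (huv : u ≠ v) :
    (∃ (w : Fin n → ℝ) (b : ℝ),
        (∀ x : Fin n → Bool, (x = u ∨ x = v) → b < ∑ i, w i * vertexCoords x i) ∧
        (∀ x : Fin n → Bool, x ≠ u → x ≠ v → ∑ i, w i * vertexCoords x i < b)) ↔
      hammingDist u v = 1 := by
  constructor
  · rintro ⟨w, b, h1, h2⟩
    by_contra hne
    -- hammingDist ≥ 2
    have hd0 : hammingDist u v ≠ 0 := by
      simpa [hammingDist_eq_zero] using huv
    have hd2 : 1 < hammingDist u v := by omega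
    rw [hammingDist, Finset.one_lt_card] at hd2
    obtain ⟨i₀, hi₀, i₁, hi₁, hne01⟩ := hd2
    simp only [Finset.mem_filter, Finset.mem_univ, true_and] at hi₀ hi₁
    set x := Function.update u i₀ (v i₀) with hx
    set y := Function.update v i₀ (u i₀) with hy
    have hxu : x ≠ u := by
      intro h
      exact hi₀ (by rw [← h]; simp [hx])
    have hxv : x ≠ v := by
      intro h
      apply hi₁
      have : x i₁ = v i₁ := by rw [h]
      rwa [hx, Function.update_of_ne (Ne.symm hne01)] at this
    have hyu : y ≠ u := by
      intro h
      apply hi₁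
      have : y i₁ = u i₁ := by rw [h]
      rw [hy, Function.update_of_ne (Ne.symm hne01)] at this
      exact this.symm
    have hyv : y ≠ v := by
      intro h
      exact hi₀ (by rw [← h]; simp [hy])
    have key : (∑ i, w i * vertexCoords x i) + (∑ i, w i * vertexCoords y i)
        = (∑ i, w i * vertexCoords u i) + (∑ i, w i * vertexCoords v i) := by
      rw [← Finset.sum_add_distrib, ← Finset.sum_add_distrib]
      apply Finset.sum_congr rfl
      intro i _
      by_cases h : i = i₀
      · subst h; simp [hx, hy, vertexCoords]; ring
      · simp [hx, hy, vertexCoords, Function.update_of_ne h]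
    have hu1 := h1 u (Or.inl rfl)
    have hv1 := h1 v (Or.inr rfl)
    have hx2 := h2 x hxu hxv
    have hy2 := h2 y hyu hyv
    linarith
  · intro hd
    rw [hammingDist, Finset.card_eq_one] at hd
    obtain ⟨j, hj⟩ := hd
    have hmem : ∀ i : Fin n, u i ≠ v i ↔ i = j := by
      intro i
      have := Finset.ext_iff.mp hj i
      simpa using this
    refine ⟨fun i => if i = j then 0 else if u i then 2 else -2,
      (∑ i, (if i = j then (0:ℝ) else if u i then 2 else -2) * vertexCoords u i) - 1, ?_, ?_⟩
    · intro x hxuv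
      have hsum : ∑ i, (if i = j then (0:ℝ) else if u i then 2 else -2) * vertexCoords x i
          = ∑ i, (if i = j then (0:ℝ) else if u i then 2 else -2) * vertexCoords u i := by
        apply Finset.sum_congr rfl
        intro i _
        by_cases h : i = j
        · simp [h]
        · have hxi : x i = u i := by
            rcases hxuv with rfl | rfl
            · rfl
            · have h2 : ¬ (u i ≠ x i) := fun hc => h ((hmem i).mp hc)
              exact (not_not.mp h2).symm
          simp [vertexCoords, hxi]
      rw [hsum]
      linarith
    · intro x hxu hxv
      -- there is i₀ ≠ j with x i₀ ≠ u i₀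
      have hex : ∃ i₀, i₀ ≠ j ∧ x i₀ ≠ u i₀ := by
        by_contra hc
        push_neg at hc
        apply hxv
        funext i
        by_cases h : i = j
        · rw [h]
          have huj : u j ≠ v j := (hmem j).mpr rfl
          have hxj : x j ≠ u j := by
            intro hcc
            apply hxu
            funext i'
            by_cases h' : i' = j
            · rw [h']; exact hcc
            · exact hc i' h'
          revert huj hxj
          cases u j <;> cases v j <;> cases x j <;> simp
        · have h1 : x i = u i := hc i h
          have h2 : u i = v i := by
            by_contra hcc
            exact h ((hmem i).mp hcc)
          rw [h1, h2]
      obtain ⟨i₀, hi₀j, hi₀x⟩ := hex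
      set f : Fin n → ℝ := fun i =>
        (if i = j then (0:ℝ) else if u i then 2 else -2) * vertexCoords u i
        - (if i = j then (0:ℝ) else if u i then 2 else -2) * vertexCoords x i with hf
      have hnonneg : ∀ i ∈ Finset.univ, (0:ℝ) ≤ f i := by
        intro i _
        simp only [hf, vertexCoords]
        by_cases h : i = j
        · simp [h]
        · simp only [if_neg h]
          cases hu : u i <;> cases hx : x i <;> norm_num
      have hbig : (2:ℝ) ≤ f i₀ := by
        simp only [hf, vertexCoords, if_neg hi₀j]
        cases hu : u i₀ <;> cases hx : x i₀ <;> simp_all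
      have hsum : (2:ℝ) ≤ ∑ i, f i := le_trans hbig
        (Finset.single_le_sum hnonneg (Finset.mem_univ i₀))
      have : ∑ i, f i = (∑ i, (if i = j then (0:ℝ) else if u i then 2 else -2) * vertexCoords u i)
          - ∑ i, (if i = j then (0:ℝ) else if u i then 2 else -2) * vertexCoords x i := by
        rw [← Finset.sum_sub_distrib]
      linarith
end

section
/- The number of Boolean functions on {0,1}^n (n ≥ 1) that take the value 1 at exactly two points and are computable by a linear threshold function equals n · 2^{n-1}, the number of edges of the hypercube. -/
open Finset

/-- `f` is computable by a linear threshold function: `f x = h(⟨w,x⟩ - b)` with `h`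
the Heaviside step function. -/
def IsLTF {n : ℕ} (f : (Fin n → Bool) → Bool) : Prop :=
  ∃ (w : Fin n → ℝ) (b : ℝ), ∀ x, f x = true ↔ 0 < (∑ i, w i * vertexCoords x i) - b

/-- The indicator function of the edge in direction `i` through `v`. -/
def edgeFun {n : ℕ} (i : Fin n) (v : Fin n → Bool) : (Fin n → Bool) → Bool :=
  fun x => decide (∀ j, j ≠ i → x j = v j)

lemma edgeFun_eq_true {n : ℕ} (i : Fin n) (v x : Fin n → Bool) :
    edgeFun i v x = true ↔ ∀ j, j ≠ i → x j = v j := by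
  simp [edgeFun]

lemma edgeFun_iff {n : ℕ} (i : Fin n) (v x : Fin n → Bool) :
    edgeFun i v x = true ↔ x = Function.update v i (x i) := by
  rw [edgeFun_eq_true]
  constructor
  · intro h; funext j
    by_cases hj : j = i
    · subst hj; simp
    · rw [Function.update_of_ne hj]; exact h j hj
  · intro h j hj
    have := congrFun h j
    rwa [Function.update_of_ne hj] at this

lemma isLTF_edgeFun {n : ℕ} (i : Fin n) (v : Fin n → Bool) : IsLTF (edgeFun i v) := by
  classical
  set w : Fin n → ℝ := fun j => if j = i then 0 else (if v j then 1 else -1) with hw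
  refine ⟨w, (∑ j, w j * vertexCoords v j) - 1/2, fun x => ?_⟩
  rw [edgeFun_eq_true]
  set g : Fin n → ℝ := fun j => w j * vertexCoords x j - w j * vertexCoords v j with hg
  have hsum : (∑ j, w j * vertexCoords x j) - ((∑ j, w j * vertexCoords v j) - 1/2)
      = (∑ j, g j) + 1/2 := by
    rw [hg, Finset.sum_sub_distrib]; ring
  rw [hsum]
  have hzero : ∀ j, j = i ∨ x j = v j → g j = 0 := by
    intro j hj
    rcases hj with hj | hj
    · simp [hg, hw, hj]
    · simp [hg, vertexCoords, hj]
  have hneg : ∀ j, j ≠ i → x j ≠ v j → g j ≤ -1 := by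
    intro j hj hxv
    have : x j = !(v j) := by
      cases hvj : v j <;> cases hxj : x j <;> simp_all
    cases hvj : v j <;>
      simp [hg, hw, hj, vertexCoords, this, hvj]
  have hnonpos : ∀ j, g j ≤ 0 := by
    intro j
    by_cases hj : j = i
    · exact le_of_eq (hzero j (Or.inl hj))
    · by_cases hxv : x j = v j
      · exact le_of_eq (hzero j (Or.inr hxv))
      · linarith [hneg j hj hxv]
  by_cases hA : ∀ j, j ≠ i → x j = v j
  · refine iff_of_true hA ?_
    have : (∑ j, g j) = 0 := by
      apply Finset.sum_eq_zero
      intro j _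
      by_cases hj : j = i
      · exact hzero j (Or.inl hj)
      · exact hzero j (Or.inr (hA j hj))
    rw [this]; norm_num
  · refine iff_of_false hA ?_
    push_neg at hA
    obtain ⟨j₀, hj₀, hxv⟩ := hA
    have h1 : (∑ j, g j) ≤ -1 := by
      have := Finset.add_sum_erase Finset.univ g (Finset.mem_univ j₀)
      rw [← this]
      have h2 : (∑ j ∈ Finset.univ.erase j₀, g j) ≤ 0 :=
        Finset.sum_nonpos fun j _ => hnonpos j
      linarith [hneg j₀ hj₀ hxv]
    intro h; linarith

lemma card_true_edgeFun {n : ℕ} (i : Fin n) (v : Fin n → Bool) (hv : v i = false) :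
    Nat.card {x // edgeFun i v x = true} = 2 := by
  rw [Nat.card_eq_two_iff]
  have hvt : edgeFun i v v = true := by
    rw [edgeFun_eq_true]; intro j _; rfl
  have hut : edgeFun i v (Function.update v i true) = true := by
    rw [edgeFun_eq_true]; intro j hj; rw [Function.update_of_ne hj]
  refine ⟨⟨v, hvt⟩, ⟨Function.update v i true, hut⟩, ?_, ?_⟩
  · intro h
    have := congrFun (congrArg Subtype.val h) i
    simp [hv] at this
  · rw [Set.eq_univ_iff_forall]
    rintro ⟨x, hx⟩
    rw [edgeFun_iff] at hx
    cases hxi : x i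
    · left
      apply Subtype.ext
      have hself : Function.update v i false = v := by
        rw [← hv]; exact Function.update_eq_self i v
      rw [hxi] at hx
      show x = v
      rw [hx, hself]
    · right
      apply Subtype.ext
      rw [hxi] at hx
      show x = Function.update v i true
      exact hx

lemma edgeFun_inj {n : ℕ} {i i' : Fin n} {v v' : Fin n → Bool}
    (hv : v i = false) (hv' : v' i' = false)
    (h : edgeFun i v = edgeFun i' v') : i = i' ∧ v = v' := by
  have agree1 : ∀ j, j ≠ i' → v j = v' j := by
    intro j hj
    have : edgeFun i' v' v = true := by
      rw [← h, edgeFun_eq_true]; intro k _; rfl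
    rw [edgeFun_eq_true] at this
    exact this j hj
  have agree2 : ∀ j, j ≠ i → v' j = v j := by
    intro j hj
    have : edgeFun i v v' = true := by
      rw [h, edgeFun_eq_true]; intro k _; rfl
    rw [edgeFun_eq_true] at this
    exact this j hj
  have hii : i = i' := by
    by_contra hne
    have h1 : edgeFun i v (Function.update v i true) = true := by
      rw [edgeFun_eq_true]; intro j hj; rw [Function.update_of_ne hj]
    rw [h, edgeFun_eq_true] at h1
    have h2 := h1 i hne
    rw [Function.update_self] at h2
    have h3 := agree1 i hne
    rw [hv] at h3
    rw [← h2] at h3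
    exact Bool.false_ne_true h3
  subst hii
  refine ⟨rfl, funext fun j => ?_⟩
  by_cases hj : j = i
  · subst hj; rw [hv, hv']
  · exact (agree2 j hj).symm

lemma eq_edgeFun_aux {n : ℕ} {f : (Fin n → Bool) → Bool} (i : Fin n) (u w : Fin n → Bool)
    (hu : f u = true) (hw : f w = true) (hui : u i = false) (hwi : w i = true)
    (hadj : ∀ j, j ≠ i → u j = w j)
    (htrue : ∀ x, f x = true → x = u ∨ x = w) : f = edgeFun i u := by
  have hweq : w = Function.update u i true := by
    funext j
    by_cases hj : j = i
    · subst hj; rw [Function.update_self, hwi]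
    · rw [Function.update_of_ne hj]; exact (hadj j hj).symm
  funext x
  have hiff : f x = true ↔ edgeFun i u x = true := by
    constructor
    · intro hx
      rcases htrue x hx with h | h
      · subst h; rw [edgeFun_eq_true]; intro j _; rfl
      · subst h; rw [edgeFun_eq_true]; intro j hj
        rw [hweq, Function.update_of_ne hj]
    · intro hx
      rw [edgeFun_iff] at hx
      cases hxi : x i
      · rw [hxi] at hx
        have : Function.update u i false = u := by
          rw [← hui]; exact Function.update_eq_self i u
        rw [hx, this]; exact hu
      · rw [hxi] at hx
        rw [hx, ← hweq]; exact hw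
  cases hex : edgeFun i u x
  · cases hfx : f x
    · rfl
    · exact absurd (hiff.mp hfx) (by rw [hex]; exact Bool.false_ne_true)
  · exact hiff.mpr hex

lemma exists_edgeFun {n : ℕ} {f : (Fin n → Bool) → Bool}
    (h2 : Nat.card {x // f x = true} = 2) (hL : IsLTF f) :
    ∃ i v, v i = false ∧ f = edgeFun i v := by
  rw [Nat.card_eq_two_iff] at h2
  obtain ⟨⟨u, hu⟩, ⟨w, hw⟩, hne, huniv⟩ := h2
  have huw : u ≠ w := fun h => hne (Subtype.ext h)
  have htrue : ∀ x, f x = true → x = u ∨ x = w := by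
    intro x hx
    have hmem : (⟨x, hx⟩ : {x // f x = true}) ∈ ({⟨u, hu⟩, ⟨w, hw⟩} : Set {x // f x = true}) := by
      rw [huniv]; trivial
    rcases hmem with h | h
    · left; exact congrArg Subtype.val h
    · right; exact congrArg Subtype.val h
  obtain ⟨ω, b, hwb⟩ := hL
  set s : (Fin n → Bool) → ℝ := fun x => ∑ k, ω k * vertexCoords x k with hs
  obtain ⟨i, hi⟩ := Function.ne_iff.mp huw
  have hadj : ∀ j, j ≠ i → u j = w j := by
    by_contra hc
    push_neg at hc
    obtain ⟨j, hj, hujwj⟩ := hc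
    set u' := Function.update u i (w i) with hu'
    set w' := Function.update w i (u i) with hw'
    have hsum : s u' + s w' = s u + s w := by
      rw [hs]
      simp only
      rw [← Finset.sum_add_distrib, ← Finset.sum_add_distrib]
      apply Finset.sum_congr rfl
      intro k _
      by_cases hk : k = i
      · subst hk
        cases hku : u k <;> cases hkw : w k <;>
          simp [hu', hw', vertexCoords, hku, hkw, Function.update_self]
      · simp only [hu', hw', vertexCoords, Function.update_of_ne hk]
    have h1 : 0 < s u - b := (hwb u).mp hu
    have h2 : 0 < s w - b := (hwb w).mp hw
    have hor : 0 < s u' - b ∨ 0 < s w' - b := by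
      by_contra hcc
      push_neg at hcc
      have := hcc.1
      have := hcc.2
      linarith
    have hcases : u' = u ∨ u' = w ∨ w' = u ∨ w' = w := by
      rcases hor with h | h
      · rcases htrue u' ((hwb u').mpr h) with h' | h'
        · exact Or.inl h'
        · exact Or.inr (Or.inl h')
      · rcases htrue w' ((hwb w').mpr h) with h' | h'
        · exact Or.inr (Or.inr (Or.inl h'))
        · exact Or.inr (Or.inr (Or.inr h'))
    rcases hcases with h | h | h | h
    · have := congrFun h i
      rw [hu', Function.update_self] at this
      exact hi this.symm
    · have := congrFun h j
      rw [hu', Function.update_of_ne hj] at this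
      exact hujwj this
    · have := congrFun h j
      rw [hw', Function.update_of_ne hj] at this
      exact hujwj this.symm
    · have := congrFun h i
      rw [hw', Function.update_self] at this
      exact hi this
  cases hui : u i
  · have hwi : w i = true := by
      cases hwi : w i
      · exact absurd (hui.trans hwi.symm) hi
      · rfl
    exact ⟨i, u, hui, eq_edgeFun_aux i u w hu hw hui hwi hadj htrue⟩
  · have hwi : w i = false := by
      cases hwi : w i
      · rfl
      · exact absurd (hui.trans hwi.symm) hi
    refine ⟨i, w, hwi, eq_edgeFun_aux i w u hw hu hwi hui (fun j hj => (hadj j hj).symm)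
      (fun x hx => (htrue x hx).symm)⟩

/-- The number of Boolean functions on `{0,1}^n` (n ≥ 1) taking the value 1 at exactly
two points and computable by a linear threshold function equals `n · 2^{n-1}`, the
number of edges of the hypercube. -/
theorem two_point_ltf_count (n : ℕ) (hn : 1 ≤ n) :
    Nat.card {f : (Fin n → Bool) → Bool //
        Nat.card {x // f x = true} = 2 ∧ IsLTF f} = n * 2 ^ (n - 1) := by
  classical
  set T := {p : Fin n × (Fin n → Bool) // p.2 p.1 = false} with hT
  set F : T → {f : (Fin n → Bool) → Bool // Nat.card {x // f x = true} = 2 ∧ IsLTF f} :=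
    fun p => ⟨edgeFun p.1.1 p.1.2, card_true_edgeFun _ _ p.2, isLTF_edgeFun _ _⟩ with hF
  have hbij : Function.Bijective F := by
    constructor
    · rintro ⟨⟨i, v⟩, hv⟩ ⟨⟨i', v'⟩, hv'⟩ h
      have heq : edgeFun i v = edgeFun i' v' := congrArg Subtype.val h
      obtain ⟨h1, h2⟩ := edgeFun_inj hv hv' heq
      apply Subtype.ext
      exact Prod.ext h1 h2
    · rintro ⟨f, h2, hL⟩
      obtain ⟨i, v, hv, hf⟩ := exists_edgeFun h2 hL
      exact ⟨⟨(i, v), hv⟩, Subtype.ext hf.symm⟩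
  rw [← Nat.card_congr (Equiv.ofBijective F hbij)]
  have e2 : T ≃ Σ i : Fin n, {v : Fin n → Bool // v i = false} :=
    Equiv.subtypeProdEquivSigmaSubtype (fun (i : Fin n) (v : Fin n → Bool) => v i = false)
  rw [Nat.card_congr e2, Nat.card_eq_fintype_card, Fintype.card_sigma]
  have hc : ∀ i : Fin n, Fintype.card {v : Fin n → Bool // v i = false} = 2 ^ (n - 1) := by
    intro i
    have e3 : {v : Fin n → Bool // v i = false} ≃ ({j : Fin n // j ≠ i} → Bool) :=
      { toFun := fun p j => p.1 j.1
        invFun := fun g => ⟨fun j => if h : j = i then false else g ⟨j, h⟩, by simp⟩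
        left_inv := by
          rintro ⟨v, hv⟩
          apply Subtype.ext
          funext j
          by_cases hj : j = i
          · subst hj; simp [hv]
          · simp [hj]
        right_inv := by
          intro g
          funext j
          simp [j.2] }
    rw [Fintype.card_congr e3, Fintype.card_fun, Fintype.card_bool]
    congr 1
    have hcompl : Fintype.card {j : Fin n // ¬ (j = i)} = n - 1 := by
      rw [Fintype.card_subtype_compl, Fintype.card_subtype_eq, Fintype.card_fin]
    exact hcompl
  simp only [hc]
  rw [Finset.sum_const, Finset.card_univ, Fintype.card_fin, smul_eq_mul]
end
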